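/- Let $\ell$ be a nonnegative integer, $U$ the $(\ell+1)\times(\ell+1)$ matrix with entries $U_{jk} = {}_3F_2(-k,-j,k+1;1,-\ell;1)$, and $A_0 = \sum_{j=0}^{\ell}(\ell-2j) E_{jj}$, $Q_0 = \sum_{j=0}^{\ell-1} \frac{(j+1)(\ell+j+2)}{2j+3} E_{j,j+1}$, $Q_1 = \sum_{j=1}^{\ell} \frac{j(\ell-j+1)}{2j-1} E_{j,j-1}$. Then $A_0 U = U (Q_0 + Q_1)$. -/

import Mathlib

/-- Pochhammer symbol (rising factorial) over ℂ. -/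
noncomputable def poch (x : ℂ) (m : ℕ) : ℂ := ∏ i ∈ Finset.range m, (x + i)

lemma poch_zero (x : ℂ) : poch x 0 = 1 := by simp [poch]

lemma poch_succ (x : ℂ) (m : ℕ) : poch x (m + 1) = poch x m * (x + m) := by
  simp [poch, Finset.prod_range_succ]

lemma poch_succ' (x : ℂ) (m : ℕ) : poch x (m + 1) = x * poch (x + 1) m := by
  unfold poch
  rw [Finset.prod_range_succ']
  rw [mul_comm]
  congr 1
  · simp
  · exact Finset.prod_congr rfl (fun i _ => by push_cast; ring)

lemma poch_one (m : ℕ) : poch 1 m = (Nat.factorial m : ℂ) := by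
  induction m with
  | zero => simp [poch_zero]
  | succ n ih => rw [poch_succ, ih, Nat.factorial_succ]; push_cast; ring

lemma poch_one_ne_zero (m : ℕ) : poch 1 m ≠ 0 := by
  rw [poch_one]
  exact_mod_cast Nat.cast_ne_zero.mpr (Nat.factorial_ne_zero m)

lemma poch_neg_nat_ne_zero {ℓ n : ℕ} (h : n ≤ ℓ) : poch (-(ℓ : ℂ)) n ≠ 0 := by
  unfold poch
  rw [Finset.prod_ne_zero_iff]
  intro i hi
  rw [Finset.mem_range] at hi
  have : (i : ℂ) ≠ (ℓ : ℂ) := by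
    exact_mod_cast Nat.ne_of_lt (lt_of_lt_of_le hi h)
  intro hz
  apply this
  linear_combination hz

lemma poch_neg_nat_eq_zero {k m : ℕ} (h : k < m) : poch (-(k : ℂ)) m = 0 := by
  unfold poch
  apply Finset.prod_eq_zero (Finset.mem_range.mpr h)
  simp

noncomputable def cc (ℓ k m : ℕ) : ℂ :=
  poch (-(k : ℂ)) m * poch ((k : ℂ) + 1) m /
    (poch 1 m * poch (-(ℓ : ℂ)) m * (Nat.factorial m : ℂ))

lemma cc_eq_zero {ℓ k m : ℕ} (h : k < m) : cc ℓ k m = 0 := by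
  unfold cc
  rw [poch_neg_nat_eq_zero h, zero_mul, zero_div]

lemma cc_zero (ℓ k : ℕ) : cc ℓ k 0 = 1 := by
  simp [cc, poch_zero]

set_option maxHeartbeats 1000000 in
lemma termwise (ℓ k m : ℕ) (hk : k ≤ ℓ) (hm : m ≤ ℓ) :
    ((ℓ : ℂ) - 2 * m) * cc ℓ k m + 2 * (if m = 0 then 0 else cc ℓ k (m - 1))
      = (k : ℂ) * ((ℓ : ℂ) + k + 1) / (2 * k + 1) * cc ℓ (k - 1) m
        + ((k : ℂ) + 1) * ((ℓ : ℂ) - k) / (2 * k + 1) * cc ℓ (k + 1) m := by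
  have h2k : (2 : ℂ) * k + 1 ≠ 0 := by
    have h : ((2 * k + 1 : ℕ) : ℂ) ≠ 0 := Nat.cast_ne_zero.mpr (by omega)
    push_cast at h; exact h
  rcases m with _ | n
  · simp only [if_pos rfl, if_true, cc_zero, Nat.cast_zero, mul_zero, sub_zero, mul_one, add_zero]
    field_simp
    ring_nf
    have h2k' : (1 + (k : ℂ) * 2) ≠ 0 := by rw [add_comm, mul_comm]; exact h2k
    field_simp
    ring
  · simp only [Nat.succ_ne_zero, if_false, Nat.add_sub_cancel]
    have hnl : n + 1 ≤ ℓ := hm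
    have hq : poch (-(ℓ : ℂ)) n ≠ 0 := poch_neg_nat_ne_zero (by omega)
    have hp : poch 1 n ≠ 0 := poch_one_ne_zero n
    have hf : ((Nat.factorial n : ℕ) : ℂ) ≠ 0 :=
      Nat.cast_ne_zero.mpr (Nat.factorial_ne_zero n)
    have hn1 : (n : ℂ) + 1 ≠ 0 := by
      have h : ((n + 1 : ℕ) : ℂ) ≠ 0 := Nat.cast_ne_zero.mpr (by omega)
      push_cast at h; exact h
    have hnℓ : -(ℓ : ℂ) + n ≠ 0 := by
      intro h
      have : (n : ℂ) = (ℓ : ℂ) := by linear_combination h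
      have : n = ℓ := by exact_mod_cast this
      omega
    rcases Nat.eq_zero_or_pos k with hk0 | hk1
    · subst hk0
      rcases Nat.eq_zero_or_pos n with hn0 | hn1'
      · subst hn0
        have hl : (ℓ : ℂ) ≠ 0 := by
          intro h
          have : ℓ = 0 := by exact_mod_cast h
          omega
        simp only [cc, Nat.cast_zero, Nat.cast_one, Nat.zero_sub, Nat.factorial_one,
          Nat.factorial_zero]
        rw [poch_succ, poch_succ, poch_succ, poch_succ, poch_succ, poch_succ,
          poch_zero, poch_zero]
        push_cast
        simp only [poch_zero]
        have hl' : -(ℓ : ℂ) ≠ 0 := neg_ne_zero.mpr hl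
        field_simp
        ring_nf
        rw [mul_inv_cancel₀ hl, one_mul]
      · have c1 : cc ℓ 0 (n + 1) = 0 := cc_eq_zero (by omega)
        have c2 : cc ℓ 0 n = 0 := cc_eq_zero (by omega)
        have c3 : cc ℓ 1 (n + 1) = 0 := cc_eq_zero (by omega)
        simp only [Nat.zero_sub, c1, c2, c3, mul_zero, add_zero, Nat.cast_zero]
    · -- main case k ≥ 1, m = n + 1 ≤ ℓ
      have hK : (k : ℂ) ≠ 0 := Nat.cast_ne_zero.mpr (by omega)
      have hK1 : (k : ℂ) + 1 ≠ 0 := by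
        have h : ((k + 1 : ℕ) : ℂ) ≠ 0 := Nat.cast_ne_zero.mpr (by omega)
        push_cast at h; exact h
      have ek1 : ((k - 1 : ℕ) : ℂ) = (k : ℂ) - 1 := by
        push_cast [hk1]; ring
      have hnℓ' : (n : ℂ) - (ℓ : ℂ) ≠ 0 := by
        intro h
        have h2 : (n : ℂ) = (ℓ : ℂ) := by linear_combination h
        have h3 : n = ℓ := by exact_mod_cast h2
        omega
      -- normalized poch expansions
      have hA : poch (-(k : ℂ)) (n + 1) = poch (-(k : ℂ)) n * ((n : ℂ) - k) := by
        rw [poch_succ]; ring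
      have hB : poch ((k : ℂ) + 1) (n + 1) = poch ((k : ℂ) + 1) n * ((n : ℂ) + k + 1) := by
        rw [poch_succ]; ring
      have hP1 : poch 1 (n + 1) = poch 1 n * ((n : ℂ) + 1) := by
        rw [poch_succ]; ring
      have hQ : poch (-(ℓ : ℂ)) (n + 1) = poch (-(ℓ : ℂ)) n * ((n : ℂ) - ℓ) := by
        rw [poch_succ]; ring
      have hF : ((Nat.factorial (n + 1) : ℕ) : ℂ) = (Nat.factorial n : ℂ) * ((n : ℂ) + 1) := by
        rw [Nat.factorial_succ]; push_cast; ring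
      have hKm1A : poch (-((k : ℂ) - 1)) (n + 1)
          = poch (-(k : ℂ)) n * ((n : ℂ) - k) / -(k : ℂ) * ((n : ℂ) - k + 1) := by
        rw [poch_succ]
        have e : -((k : ℂ) - 1) + (n : ℂ) = (n : ℂ) - k + 1 := by ring
        rw [e]
        congr 1
        rw [eq_div_iff (neg_ne_zero.mpr hK)]
        have h1 : poch (-(k : ℂ)) (n + 1) = -(k : ℂ) * poch (-(k : ℂ) + 1) n :=
          poch_succ' _ _
        have e2 : -((k : ℂ) - 1) = -(k : ℂ) + 1 := by ring
        rw [e2]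
        linear_combination h1.symm.trans hA
      have hKm1B : poch (((k : ℂ) - 1) + 1) (n + 1) = (k : ℂ) * poch ((k : ℂ) + 1) n := by
        have e : ((k : ℂ) - 1) + 1 = (k : ℂ) := by ring
        rw [e, poch_succ']
      have hKp1A : poch (-((k : ℂ) + 1)) (n + 1) = (-((k : ℂ) + 1)) * poch (-(k : ℂ)) n := by
        have h1 := poch_succ' (-((k : ℂ) + 1)) n
        have e : -((k : ℂ) + 1) + 1 = -(k : ℂ) := by ring
        rw [e] at h1
        exact h1
      have hKp1B : poch (((k : ℂ) + 1) + 1) (n + 1)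
          = poch ((k : ℂ) + 1) n * ((n : ℂ) + k + 1) / ((k : ℂ) + 1) * ((n : ℂ) + k + 2) := by
        have e : ((k : ℂ) + 1) + 1 = (k : ℂ) + 2 := by ring
        rw [e, poch_succ]
        have e1 : (k : ℂ) + 2 + (n : ℂ) = (n : ℂ) + k + 2 := by ring
        rw [e1]
        congr 1
        rw [eq_div_iff hK1]
        have h1 : poch ((k : ℂ) + 1) (n + 1) = ((k : ℂ) + 1) * poch ((k : ℂ) + 2) n := by
          have h2 := poch_succ' ((k : ℂ) + 1) n
          have e2 : (k : ℂ) + 1 + 1 = (k : ℂ) + 2 := by ring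
          rw [e2] at h2
          exact h2
        linear_combination h1.symm.trans hB
      -- closed forms for the four cc values
      have c1 : cc ℓ k (n + 1)
          = poch (-(k : ℂ)) n * poch ((k : ℂ) + 1) n * (((n : ℂ) - k) * ((n : ℂ) + k + 1)) /
              (poch 1 n * poch (-(ℓ : ℂ)) n * (Nat.factorial n : ℂ) *
                (((n : ℂ) + 1) * ((n : ℂ) + 1) * ((n : ℂ) - ℓ))) := by
        unfold cc
        rw [hA, hB, hP1, hQ, hF]
        ring
      have c2 : cc ℓ k n
          = poch (-(k : ℂ)) n * poch ((k : ℂ) + 1) n /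
              (poch 1 n * poch (-(ℓ : ℂ)) n * (Nat.factorial n : ℂ)) := rfl
      have c3 : cc ℓ (k - 1) (n + 1)
          = -(poch (-(k : ℂ)) n * poch ((k : ℂ) + 1) n * (((n : ℂ) - k) * ((n : ℂ) - k + 1))) /
              (poch 1 n * poch (-(ℓ : ℂ)) n * (Nat.factorial n : ℂ) *
                (((n : ℂ) + 1) * ((n : ℂ) + 1) * ((n : ℂ) - ℓ))) := by
        unfold cc
        rw [ek1, hKm1A, hKm1B, hP1, hQ, hF]
        have inner : poch (-(k : ℂ)) n * ((n : ℂ) - k) / -(k : ℂ) * ((n : ℂ) - k + 1) *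
              ((k : ℂ) * poch ((k : ℂ) + 1) n)
            = -(poch (-(k : ℂ)) n * poch ((k : ℂ) + 1) n * (((n : ℂ) - k) * ((n : ℂ) - k + 1))) := by
          rw [div_mul_eq_mul_div, div_mul_eq_mul_div, div_eq_iff (neg_ne_zero.mpr hK)]
          ring
        rw [inner]
        rw [div_eq_div_iff (by apply_rules [mul_ne_zero]) (by apply_rules [mul_ne_zero])]
        ring
      have c4 : cc ℓ (k + 1) (n + 1)
          = -(poch (-(k : ℂ)) n * poch ((k : ℂ) + 1) n * (((n : ℂ) + k + 1) * ((n : ℂ) + k + 2))) /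
              (poch 1 n * poch (-(ℓ : ℂ)) n * (Nat.factorial n : ℂ) *
                (((n : ℂ) + 1) * ((n : ℂ) + 1) * ((n : ℂ) - ℓ))) := by
        unfold cc
        have ek2 : ((k + 1 : ℕ) : ℂ) = (k : ℂ) + 1 := by push_cast; ring
        rw [ek2, hKp1A, hKp1B, hP1, hQ, hF]
        have inner : -((k : ℂ) + 1) * poch (-(k : ℂ)) n *
              (poch ((k : ℂ) + 1) n * ((n : ℂ) + k + 1) / ((k : ℂ) + 1) * ((n : ℂ) + k + 2))
            = -(poch (-(k : ℂ)) n * poch ((k : ℂ) + 1) n *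
                (((n : ℂ) + k + 1) * ((n : ℂ) + k + 2))) := by
          rw [div_mul_eq_mul_div, ← mul_div_assoc, div_eq_iff hK1]
          ring
        rw [inner]
        rw [div_eq_div_iff (by apply_rules [mul_ne_zero]) (by apply_rules [mul_ne_zero])]
        ring
      rw [c1, c2, c3, c4]
      push_cast
      set a := poch (-(k : ℂ)) n with ha
      set b := poch ((k : ℂ) + 1) n with hb
      set p := poch 1 n with hpp
      set q := poch (-(ℓ : ℂ)) n with hqq
      have hd : p * q * (Nat.factorial n : ℂ) ≠ 0 := mul_ne_zero (mul_ne_zero hp hq) hf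
      have hD : p * q * (Nat.factorial n : ℂ) *
          (((n : ℂ) + 1) * ((n : ℂ) + 1) * ((n : ℂ) - ℓ)) ≠ 0 :=
        mul_ne_zero hd (mul_ne_zero (mul_ne_zero hn1 hn1) hnℓ')
      rw [div_mul_div_comm, div_mul_div_comm]
      rw [← mul_div_assoc, ← mul_div_assoc]
      rw [div_add_div _ _ hD hd, ← add_div]
      rw [div_eq_div_iff (mul_ne_zero hD hd) (mul_ne_zero h2k hD)]
      ring
/-- Hahn polynomial value `U_{j k} = ₃F₂(-k, -j, k+1; 1, -ℓ; 1)` (terminating sum). -/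
noncomputable def hahnU (ℓ j k : ℕ) : ℂ :=
  ∑ m ∈ Finset.range (k + 1),
    (poch (-(k : ℂ)) m * poch (-(j : ℂ)) m * poch ((k : ℂ) + 1) m) /
      (poch 1 m * poch (-(ℓ : ℂ)) m * (Nat.factorial m : ℂ))


lemma hahnU_eq (ℓ j k N : ℕ) (h : k < N) :
    hahnU ℓ j k = ∑ m ∈ Finset.range N, cc ℓ k m * poch (-(j : ℂ)) m := by
  have step1 : hahnU ℓ j k = ∑ m ∈ Finset.range (k + 1), cc ℓ k m * poch (-(j : ℂ)) m :=
    Finset.sum_congr rfl (fun m _ => by unfold cc; ring)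
  rw [step1]
  apply Finset.sum_subset (Finset.range_subset_range.mpr h)
  intro m _ hm
  rw [Finset.mem_range, not_lt] at hm
  rw [cc_eq_zero (by omega), zero_mul]

lemma key (ℓ j k : ℕ) (hj : j ≤ ℓ) (hk : k ≤ ℓ) :
    ((ℓ : ℂ) - 2 * j) * hahnU ℓ j k
      = (k : ℂ) * ((ℓ : ℂ) + k + 1) / (2 * k + 1) * hahnU ℓ j (k - 1)
        + ((k : ℂ) + 1) * ((ℓ : ℂ) - k) / (2 * k + 1) * hahnU ℓ j (k + 1) := by
  rw [hahnU_eq ℓ j k (ℓ + 2) (by omega), hahnU_eq ℓ j (k - 1) (ℓ + 2) (by omega),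
    hahnU_eq ℓ j (k + 1) (ℓ + 2) (by omega)]
  -- rewrite LHS summand
  have shift : ∀ m : ℕ, ((ℓ : ℂ) - 2 * j) * (cc ℓ k m * poch (-(j : ℂ)) m)
      = ((ℓ : ℂ) - 2 * m) * cc ℓ k m * poch (-(j : ℂ)) m
        + 2 * (cc ℓ k m * poch (-(j : ℂ)) (m + 1)) := by
    intro m
    rw [poch_succ]
    ring
  calc ((ℓ : ℂ) - 2 * j) * ∑ m ∈ Finset.range (ℓ + 2), cc ℓ k m * poch (-(j : ℂ)) m
      = ∑ m ∈ Finset.range (ℓ + 2),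
          (((ℓ : ℂ) - 2 * m) * cc ℓ k m * poch (-(j : ℂ)) m
            + 2 * (cc ℓ k m * poch (-(j : ℂ)) (m + 1))) := by
        rw [Finset.mul_sum]
        exact Finset.sum_congr rfl (fun m _ => shift m)
    _ = (∑ m ∈ Finset.range (ℓ + 2), ((ℓ : ℂ) - 2 * m) * cc ℓ k m * poch (-(j : ℂ)) m)
        + 2 * ∑ m ∈ Finset.range (ℓ + 2), cc ℓ k m * poch (-(j : ℂ)) (m + 1) := by
        rw [Finset.sum_add_distrib, Finset.mul_sum]
    _ = (∑ m ∈ Finset.range (ℓ + 2), ((ℓ : ℂ) - 2 * m) * cc ℓ k m * poch (-(j : ℂ)) m)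
        + 2 * ∑ m ∈ Finset.range (ℓ + 2),
            (if m = 0 then 0 else cc ℓ k (m - 1)) * poch (-(j : ℂ)) m := by
        congr 1
        congr 1
        -- reindex
        rw [Finset.sum_range_succ' (fun m => (if m = 0 then 0 else cc ℓ k (m - 1)) * poch (-(j : ℂ)) m) (ℓ + 1)]
        simp only [Nat.succ_ne_zero, if_false, Nat.add_sub_cancel, if_pos rfl, zero_mul, add_zero]
        rw [Finset.sum_range_succ]
        rw [cc_eq_zero (by omega : k < ℓ + 1), zero_mul, add_zero]
        simp
    _ = ∑ m ∈ Finset.range (ℓ + 2),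
          (((ℓ : ℂ) - 2 * m) * cc ℓ k m + 2 * (if m = 0 then 0 else cc ℓ k (m - 1)))
            * poch (-(j : ℂ)) m := by
        rw [Finset.mul_sum, ← Finset.sum_add_distrib]
        exact Finset.sum_congr rfl (fun m _ => by ring)
    _ = ∑ m ∈ Finset.range (ℓ + 2),
          ((k : ℂ) * ((ℓ : ℂ) + k + 1) / (2 * k + 1) * (cc ℓ (k - 1) m * poch (-(j : ℂ)) m)
            + ((k : ℂ) + 1) * ((ℓ : ℂ) - k) / (2 * k + 1) * (cc ℓ (k + 1) m * poch (-(j : ℂ)) m)) := by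
        apply Finset.sum_congr rfl
        intro m hm
        rw [Finset.mem_range] at hm
        rcases Nat.lt_or_ge m (ℓ + 1) with h1 | h1
        · have := termwise ℓ k m hk (by omega)
          calc (((ℓ : ℂ) - 2 * m) * cc ℓ k m + 2 * (if m = 0 then 0 else cc ℓ k (m - 1)))
                * poch (-(j : ℂ)) m
              = ((k : ℂ) * ((ℓ : ℂ) + k + 1) / (2 * k + 1) * cc ℓ (k - 1) m
                  + ((k : ℂ) + 1) * ((ℓ : ℂ) - k) / (2 * k + 1) * cc ℓ (k + 1) m)
                * poch (-(j : ℂ)) m := by rw [this]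
            _ = _ := by ring
        · have hm2 : m = ℓ + 1 := by omega
          subst hm2
          rw [poch_neg_nat_eq_zero (by omega : j < ℓ + 1)]
          ring
    _ = (k : ℂ) * ((ℓ : ℂ) + k + 1) / (2 * k + 1)
          * ∑ m ∈ Finset.range (ℓ + 2), cc ℓ (k - 1) m * poch (-(j : ℂ)) m
        + ((k : ℂ) + 1) * ((ℓ : ℂ) - k) / (2 * k + 1)
          * ∑ m ∈ Finset.range (ℓ + 2), cc ℓ (k + 1) m * poch (-(j : ℂ)) m := by
        rw [Finset.sum_add_distrib, ← Finset.mul_sum, ← Finset.mul_sum]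
/-- The matrix `U` with entries `U_{jk}`. -/
noncomputable def Umat (ℓ : ℕ) : Matrix (Fin (ℓ + 1)) (Fin (ℓ + 1)) ℂ :=
  Matrix.of fun j k => hahnU ℓ (j : ℕ) (k : ℕ)

/-- `A₀ = ∑_j (ℓ - 2j) E_{jj}`. -/
noncomputable def A0 (ℓ : ℕ) : Matrix (Fin (ℓ + 1)) (Fin (ℓ + 1)) ℂ :=
  Matrix.diagonal fun j => (ℓ : ℂ) - 2 * ((j : ℕ) : ℂ)

/-- `Q₀ = ∑_{j=0}^{ℓ-1} ((j+1)(ℓ+j+2)/(2j+3)) E_{j,j+1}`. -/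
noncomputable def Q0 (ℓ : ℕ) : Matrix (Fin (ℓ + 1)) (Fin (ℓ + 1)) ℂ :=
  Matrix.of fun j k =>
    if (k : ℕ) = (j : ℕ) + 1 then
      (((j : ℕ) : ℂ) + 1) * ((ℓ : ℂ) + (j : ℕ) + 2) / (2 * ((j : ℕ) : ℂ) + 3)
    else 0

/-- `Q₁ = ∑_{j=1}^{ℓ} (j(ℓ-j+1)/(2j-1)) E_{j,j-1}`. -/
noncomputable def Q1 (ℓ : ℕ) : Matrix (Fin (ℓ + 1)) (Fin (ℓ + 1)) ℂ :=
  Matrix.of fun j k =>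
    if (j : ℕ) = (k : ℕ) + 1 then
      ((j : ℕ) : ℂ) * ((ℓ : ℂ) - (j : ℕ) + 1) / (2 * ((j : ℕ) : ℂ) - 1)
    else 0

lemma sumQ0 (ℓ : ℕ) (j k : Fin (ℓ + 1)) :
    (Umat ℓ * Q0 ℓ) j k
      = ((k : ℕ) : ℂ) * ((ℓ : ℂ) + (k : ℕ) + 1) / (2 * ((k : ℕ) : ℂ) + 1)
          * hahnU ℓ (j : ℕ) ((k : ℕ) - 1) := by
  rw [Matrix.mul_apply]
  rcases Nat.eq_zero_or_pos (k : ℕ) with h0 | hpos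
  · have hz : ∀ m ∈ Finset.univ, Umat ℓ j m * Q0 ℓ m k = 0 := by
      intro m _
      have : Q0 ℓ m k = 0 := by
        simp only [Q0, Matrix.of_apply]
        rw [if_neg (by omega)]
      rw [this, mul_zero]
    rw [Finset.sum_eq_zero hz, h0]
    simp
  · obtain ⟨K, hK⟩ : ∃ K, (k : ℕ) = K + 1 := ⟨(k : ℕ) - 1, by omega⟩
    have hKℓ : K < ℓ + 1 := by have := k.isLt; omega
    rw [Finset.sum_eq_single (⟨K, hKℓ⟩ : Fin (ℓ + 1))]
    · simp only [Umat, Q0, Matrix.of_apply]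
      rw [if_pos (by simpa using hK)]
      have e1 : (k : ℕ) - 1 = K := by omega
      have e2 : ((k : ℕ) : ℂ) = (K : ℂ) + 1 := by rw [hK]; push_cast; ring
      rw [e1, e2]
      ring
    · intro m _ hm
      have : Q0 ℓ m k = 0 := by
        simp only [Q0, Matrix.of_apply]
        rw [if_neg (by
          intro hc
          exact hm (Fin.ext (show (m : ℕ) = K by omega)))]
      rw [this, mul_zero]
    · intro h
      exact absurd (Finset.mem_univ _) h

lemma sumQ1 (ℓ : ℕ) (j k : Fin (ℓ + 1)) :
    (Umat ℓ * Q1 ℓ) j k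
      = (((k : ℕ) : ℂ) + 1) * ((ℓ : ℂ) - (k : ℕ)) / (2 * ((k : ℕ) : ℂ) + 1)
          * hahnU ℓ (j : ℕ) ((k : ℕ) + 1) := by
  rw [Matrix.mul_apply]
  rcases Nat.lt_or_ge (k : ℕ) ℓ with hlt | hge
  · have hKℓ : (k : ℕ) + 1 < ℓ + 1 := by omega
    rw [Finset.sum_eq_single (⟨(k : ℕ) + 1, hKℓ⟩ : Fin (ℓ + 1))]
    · simp only [Umat, Q1, Matrix.of_apply]
      rw [if_pos (by simp)]
      push_cast
      ring
    · intro m _ hm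
      have : Q1 ℓ m k = 0 := by
        simp only [Q1, Matrix.of_apply]
        rw [if_neg (by
          intro hc
          exact hm (Fin.ext (show (m : ℕ) = (k : ℕ) + 1 by omega)))]
      rw [this, mul_zero]
    · intro h
      exact absurd (Finset.mem_univ _) h
  · have hk : (k : ℕ) = ℓ := by have := k.isLt; omega
    have hz : ∀ m ∈ Finset.univ, Umat ℓ j m * Q1 ℓ m k = 0 := by
      intro m _
      have : Q1 ℓ m k = 0 := by
        simp only [Q1, Matrix.of_apply]
        rw [if_neg (by have := m.isLt; omega)]
      rw [this, mul_zero]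
    rw [Finset.sum_eq_zero hz]
    have : (ℓ : ℂ) - ((k : ℕ) : ℂ) = 0 := by rw [hk]; ring
    rw [this]
    simp

/-- `A₀ U = U (Q₀ + Q₁)`. -/
theorem A0_mul_U (ℓ : ℕ) : A0 ℓ * Umat ℓ = Umat ℓ * (Q0 ℓ + Q1 ℓ) := by
  ext j k
  rw [Matrix.mul_add, Matrix.add_apply, sumQ0, sumQ1]
  have hL : (A0 ℓ * Umat ℓ) j k = ((ℓ : ℂ) - 2 * ((j : ℕ) : ℂ)) * hahnU ℓ (j : ℕ) (k : ℕ) := by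
    rw [A0, Matrix.diagonal_mul]
    rfl
  rw [hL]
  exact key ℓ (j : ℕ) (k : ℕ) (by omega) (by omega)
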